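/- arXiv:math/0007115 — 3 statements merged into one kernel-verified Lean document; each statement's English description precedes it below -/
import Mathlib

section
/- Let (X¹,…,Xᵐ) be a full exceptional collection in 𝒞. Then the family (Y¹,…,Yᵐ) defined by Yⁱ = T_{X¹}(X^{i+1}) for 1 ≤ i < m and Yᵐ = X¹ is again a full exceptional collection in 𝒞. -/
open CategoryTheory Category Limits Pretriangulated

universe v u

variable (C : Type u) [Category.{v} C] [Preadditive C] [HasZeroObject C]
  [HasShift C ℤ] [∀ n : ℤ, (shiftFunctor C n).Additive] [Pretriangulated C]
  [CategoryTheory.Linear (ZMod 2) C] [HasFiniteBiproducts C]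

variable {C}

/-- `X` is an exceptional object: `Hom(X, X[r]) = 0` for `r ≠ 0`, and `Hom(X, X)` is
one-dimensional over `𝔽₂`, spanned by the identity. -/
def IsExceptional (X : C) : Prop :=
  (∀ r : ℤ, r ≠ 0 → ∀ f : X ⟶ X⟦r⟧, f = 0) ∧
  (𝟙 X ≠ 0) ∧
  Submodule.span (ZMod 2) {𝟙 X} = (⊤ : Submodule (ZMod 2) (X ⟶ X))

/-- `(X i)` is an exceptional collection: each object is exceptional and
`Hom(Xⁱ, Xᵏ[r]) = 0` for `i > k`. -/
def IsExceptionalCollection {m : ℕ} (X : Fin m → C) : Prop :=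
  (∀ i, IsExceptional (X i)) ∧
  ∀ i k : Fin m, k < i → ∀ (r : ℤ) (f : X i ⟶ (X k)⟦r⟧), f = 0

/-- The collection `(X i)` is full: any strictly full triangulated subcategory
(closed under isomorphisms) containing all the `X i` is all of `C`. -/
def IsFullCollection {m : ℕ} (X : Fin m → C) : Prop :=
  ∀ S : ObjectProperty C, S.IsTriangulated → S.IsClosedUnderIsomorphisms →
    (∀ i, S (X i)) → ∀ Z : C, S Z

/-- `T` is (a choice of) the mutated object `T_X(Y)`: there is a finite family
`f j : X ⟶ Y⟦r j⟧` forming a homogeneous basis of `⊕_r Hom(X, Y[r])`, and a distinguished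
triangle `⊕_j X[-r j] → Y → T → (⊕_j X[-r j])[1]` whose first map is the evaluation map. -/
def IsTwist (X Y T : C) : Prop :=
  ∃ (κ : ℕ) (r : Fin κ → ℤ) (f : ∀ j, X ⟶ Y⟦r j⟧),
    (∀ s : ℤ,
      LinearIndependent (ZMod 2)
        (fun j : {j : Fin κ // r j = s} =>
          f j.1 ≫ eqToHom (congrArg (fun t => Y⟦t⟧) j.2)) ∧
      Submodule.span (ZMod 2)
        (Set.range (fun j : {j : Fin κ // r j = s} =>
          f j.1 ≫ eqToHom (congrArg (fun t => Y⟦t⟧) j.2))) = ⊤) ∧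
    ∃ (g : Y ⟶ T) (h : T ⟶ (⨁ fun j => X⟦-r j⟧)⟦(1:ℤ)⟧),
      Triangle.mk
        (biproduct.desc fun j =>
          (f j)⟦-r j⟧' ≫ (shiftFunctorCompIsoId C (r j) (-r j) (add_neg_cancel _)).hom.app Y)
        g h ∈ distTriang C

set_option linter.unusedSectionVars false
set_option linter.unusedVariables false

lemma char2_neg {P Q : C} (f : P ⟶ Q) : -f = f := by
  have h2 : f + f = 0 := by
    have := two_smul (ZMod 2) f
    rw [show (2 : ZMod 2) = 0 by decide, zero_smul] at this
    exact this.symm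
  exact neg_eq_of_add_eq_zero_left h2

lemma char2_smul {P Q : C} (n : ℤ) (f : P ⟶ Q) : n.negOnePow • f = f := by
  rcases Int.even_or_odd n with h | h
  · rw [Int.negOnePow_even _ h, one_smul]
  · rw [Int.negOnePow_odd _ h, Units.smul_def]
    simp only [Units.val_neg, Units.val_one, neg_smul, one_smul]
    exact char2_neg f

/-- unsigned shift of a distinguished triangle is distinguished (char 2). -/
lemma shiftTriangle_distinguished (T : Triangle C) (hT : T ∈ distTriang C) (s : ℤ) :
    Triangle.mk (T.mor₁⟦s⟧') (T.mor₂⟦s⟧')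
      (T.mor₃⟦s⟧' ≫ (shiftFunctorComm C 1 s).hom.app T.obj₁) ∈ distTriang C := by
  refine isomorphic_distinguished _ (Triangle.shift_distinguished T hT s) _ ?_
  refine Triangle.isoMk _ _ (Iso.refl _) (Iso.refl _) (Iso.refl _) ?_ ?_ ?_ <;>
    · dsimp [Triangle.shiftFunctor, Triangle.mk]
      simp [char2_smul]


/-- All graded homs from `A` to `Z` vanish. -/
def HomZero (A Z : C) : Prop := ∀ (s : ℤ) (f : A ⟶ Z⟦s⟧), f = 0

lemma HomZero.zero' {A Z : C} (h : HomZero A Z) (f : A ⟶ Z) : f = 0 := by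
  have h0 := h 0 (f ≫ (shiftFunctorZero C ℤ).inv.app Z)
  rwa [← cancel_mono ((shiftFunctorZero C ℤ).inv.app Z), zero_comp]

lemma HomZero.shift_right {A Z : C} (h : HomZero A Z) (t : ℤ) : HomZero A (Z⟦t⟧) := by
  intro s f
  have h0 := h (t + s) (f ≫ (shiftFunctorAdd' C t s (t + s) rfl).inv.app Z)
  rwa [← cancel_mono ((shiftFunctorAdd' C t s (t + s) rfl).inv.app Z), zero_comp]

lemma HomZero.shift_left {A Z : C} (h : HomZero A Z) (t : ℤ) : HomZero (A⟦t⟧) Z := by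
  intro s f
  apply (shiftFunctor C (-t)).map_injective
  rw [Functor.map_zero]
  have key : (shiftFunctorCompIsoId C t (-t) (add_neg_cancel t)).inv.app A ≫ f⟦-t⟧' ≫
      (shiftFunctorAdd' C s (-t) (s - t) (by ring)).inv.app Z = 0 := h (s - t) _
  rw [← cancel_mono ((shiftFunctorAdd' C s (-t) (s - t) (by ring)).inv.app Z),
    ← cancel_epi ((shiftFunctorCompIsoId C t (-t) (add_neg_cancel t)).inv.app A),
    zero_comp, comp_zero]
  exact key

lemma HomZero.biproduct_left {J : Type} [Fintype J] {G : J → C} {Z : C}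
    (h : ∀ j, HomZero (G j) Z) : HomZero (⨁ G) Z := by
  intro s f
  apply biproduct.hom_ext'
  intro j
  rw [h j s (biproduct.ι G j ≫ f), comp_zero]

lemma HomZero.biproduct_right {J : Type} [Fintype J] {A : C} {G : J → C}
    (h : ∀ j, HomZero A (G j)) : HomZero A (⨁ G) := by
  intro s f
  have : f = f ≫ (𝟙 (⨁ G))⟦s⟧' := by simp
  rw [this, ← biproduct.total, Functor.map_sum, Preadditive.comp_sum]
  refine Finset.sum_eq_zero fun j _ => ?_
  rw [Functor.map_comp, ← assoc, h j s (f ≫ (biproduct.π G j)⟦s⟧'), zero_comp]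

section LES

variable {T : Triangle C}

/-- covariant: vanishing into obj₁ and obj₂ gives vanishing into obj₃. -/
lemma HomZero.triangle₃ (hT : T ∈ distTriang C) {A : C} (h₁ : HomZero A T.obj₁) (h₂ : HomZero A T.obj₂) :
    HomZero A T.obj₃ := by
  intro s f
  have hTs := shiftTriangle_distinguished T hT s
  have hf : f ≫ (T.mor₃⟦s⟧' ≫ (shiftFunctorComm C 1 s).hom.app T.obj₁) = 0 := by
    rw [← assoc]
    exact (h₁.shift_right s) 1 _
  obtain ⟨g, hg⟩ := Triangle.coyoneda_exact₃ _ hTs f hf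
  rw [hg]; obtain rfl := h₂ s g; exact zero_comp

/-- covariant: vanishing into obj₁ and obj₃ gives vanishing into obj₂. -/
lemma HomZero.triangle₂ (hT : T ∈ distTriang C) {A : C} (h₁ : HomZero A T.obj₁) (h₃ : HomZero A T.obj₃) :
    HomZero A T.obj₂ := by
  intro s f
  have hTs := shiftTriangle_distinguished T hT s
  have hf : f ≫ T.mor₂⟦s⟧' = 0 := h₃ s _
  obtain ⟨g, hg⟩ := Triangle.coyoneda_exact₂ _ hTs f hf
  rw [hg]; obtain rfl := h₁ s g; exact zero_comp

/-- contravariant: vanishing out of obj₁ and obj₂ gives vanishing out of obj₃. -/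
lemma HomZero.triangle₃' (hT : T ∈ distTriang C) {Z : C} (h₁ : HomZero T.obj₁ Z) (h₂ : HomZero T.obj₂ Z) :
    HomZero T.obj₃ Z := by
  intro s f
  obtain ⟨g, hg⟩ := Triangle.yoneda_exact₃ T hT f (h₂ s _)
  rw [hg, (h₁.shift_left 1) s g, comp_zero]

/-- contravariant: vanishing out of obj₁ and obj₃ gives vanishing out of obj₂. -/
lemma HomZero.triangle₂' (hT : T ∈ distTriang C) {Z : C} (h₁ : HomZero T.obj₁ Z) (h₃ : HomZero T.obj₃ Z) :
    HomZero T.obj₂ Z := by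
  intro s f
  obtain ⟨g, hg⟩ := Triangle.yoneda_exact₂ T hT f (h₁ s _)
  rw [hg, h₃ s g, comp_zero]

end LES

section Twist

variable {E Xo : C} {κ : ℕ} {r : Fin κ → ℤ}

/-- canonical unit map `E ⟶ E⟦-r j⟧⟦r j⟧`. -/
private noncomputable def tV (E : C) (r : Fin κ → ℤ) (j : Fin κ) : E ⟶ (E⟦-r j⟧)⟦r j⟧ :=
  (shiftFunctorCompIsoId C (-r j) (r j) (neg_add_cancel _)).inv.app E

/-- canonical map `E ⟶ B⟦r j⟧` hitting the `j`-th summand. -/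
private noncomputable def tU (E : C) (r : Fin κ → ℤ) (j : Fin κ) : E ⟶ (⨁ fun k => E⟦-r k⟧)⟦r j⟧ :=
  tV E r j ≫ (biproduct.ι (fun k => E⟦-r k⟧) j)⟦r j⟧'

/-- the evaluation map from the twist data. -/
private noncomputable abbrev twEv (f : ∀ j, E ⟶ Xo⟦r j⟧) : (⨁ fun j => E⟦-r j⟧) ⟶ Xo :=
  biproduct.desc fun j =>
    (f j)⟦-r j⟧' ≫ (shiftFunctorCompIsoId C (r j) (-r j) (add_neg_cancel _)).hom.app Xo

private lemma tU_comp_ev (f : ∀ j, E ⟶ Xo⟦r j⟧) (j : Fin κ) :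
    tU E r j ≫ (twEv f)⟦r j⟧' = f j := by
  rw [tU, tV, assoc, ← Functor.map_comp, biproduct.ι_desc, Functor.map_comp]
  have nat := (shiftFunctorCompIsoId C (-r j) (r j) (neg_add_cancel (r j))).inv.naturality (f j)
  dsimp at nat
  rw [← assoc, ← nat, assoc, shift_shiftFunctorCompIsoId_add_neg_cancel_hom_app,
    Iso.inv_hom_id_app]
  simp

private lemma tU_comp_ev' (f : ∀ j, E ⟶ Xo⟦r j⟧) (s : ℤ) (j : Fin κ) (hj : r j = s) :
    (tU E r j ≫ eqToHom (congrArg (fun t => (⨁ fun l => E⟦-r l⟧)⟦t⟧) hj)) ≫ (twEv f)⟦s⟧' =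
      f j ≫ eqToHom (congrArg (fun t => Xo⟦t⟧) hj) := by
  subst hj
  simpa using tU_comp_ev f j

private lemma mem_span_tU (hE : IsExceptional E) (j : Fin κ) (s : ℤ) (hj : r j = s)
    (c : E ⟶ (E⟦-r j⟧)⟦s⟧) :
    c ≫ (biproduct.ι (fun k => E⟦-r k⟧) j)⟦s⟧' ∈
      Submodule.span (ZMod 2) (Set.range (fun k : {k : Fin κ // r k = s} =>
        tU E r k.1 ≫ eqToHom (congrArg (fun t => (⨁ fun l => E⟦-r l⟧)⟦t⟧) k.2))) := by
  subst hj
  have hd : c ≫ (shiftFunctorCompIsoId C (-r j) (r j) (neg_add_cancel _)).hom.app E ∈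
      Submodule.span (ZMod 2) {𝟙 E} := by rw [hE.2.2]; trivial
  obtain ⟨a, ha⟩ := Submodule.mem_span_singleton.mp hd
  have hc : c = a • tV E r j := by
    rw [← cancel_mono ((shiftFunctorCompIsoId C (-r j) (r j) (neg_add_cancel _)).hom.app E),
      Linear.smul_comp, tV, Iso.inv_hom_id_app]
    exact ha.symm
  have hcu : c ≫ (biproduct.ι (fun k => E⟦-r k⟧) j)⟦r j⟧' = a • tU E r j := by
    rw [hc, tU, Linear.smul_comp]
  rw [hcu]
  exact Submodule.smul_mem _ a (Submodule.subset_span ⟨⟨j, rfl⟩, by simp⟩)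

private lemma span_tU (hE : IsExceptional E) (s : ℤ)
    (χ : E ⟶ (⨁ fun k => E⟦-r k⟧)⟦s⟧) :
    χ ∈ Submodule.span (ZMod 2) (Set.range (fun k : {k : Fin κ // r k = s} =>
      tU E r k.1 ≫ eqToHom (congrArg (fun t => (⨁ fun l => E⟦-r l⟧)⟦t⟧) k.2))) := by
  have hdec : χ = ∑ j : Fin κ,
      (χ ≫ (biproduct.π (fun k => E⟦-r k⟧) j)⟦s⟧') ≫ (biproduct.ι (fun k => E⟦-r k⟧) j)⟦s⟧' := by
    conv_lhs => rw [show χ = χ ≫ (𝟙 (⨁ fun k => E⟦-r k⟧))⟦s⟧' by simp]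
    rw [← biproduct.total, Functor.map_sum, Preadditive.comp_sum]
    exact Finset.sum_congr rfl fun j _ => by rw [Functor.map_comp, assoc]
  rw [hdec]
  refine Submodule.sum_mem _ fun j _ => ?_
  by_cases hj : r j = s
  · exact mem_span_tU hE j s hj _
  · have hz : χ ≫ (biproduct.π (fun k => E⟦-r k⟧) j)⟦s⟧' = 0 := by
      rw [← cancel_mono ((shiftFunctorAdd' C (-r j) s (s - r j) (by ring)).inv.app E), zero_comp]
      exact hE.1 (s - r j) (sub_ne_zero_of_ne (Ne.symm hj)) _
    rw [hz, zero_comp]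
    exact Submodule.zero_mem _

end Twist

section Twist2

variable {E Xo : C} {κ : ℕ} {r : Fin κ → ℤ}

private lemma ev_inj (hE : IsExceptional E) (f : ∀ j, E ⟶ Xo⟦r j⟧)
    (hbasis : ∀ s : ℤ,
      LinearIndependent (ZMod 2)
        (fun j : {j : Fin κ // r j = s} =>
          f j.1 ≫ eqToHom (congrArg (fun t => Xo⟦t⟧) j.2)) ∧
      Submodule.span (ZMod 2)
        (Set.range (fun j : {j : Fin κ // r j = s} =>
          f j.1 ≫ eqToHom (congrArg (fun t => Xo⟦t⟧) j.2))) = ⊤)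
    (s : ℤ) (χ : E ⟶ (⨁ fun k => E⟦-r k⟧)⟦s⟧) (hχ : χ ≫ (twEv f)⟦s⟧' = 0) : χ = 0 := by
  obtain ⟨a, ha⟩ := (Submodule.mem_span_range_iff_exists_fun (ZMod 2)).mp (span_tU hE s χ)
  have hsum : ∑ k : {k : Fin κ // r k = s},
      a k • (f k.1 ≫ eqToHom (congrArg (fun t => Xo⟦t⟧) k.2)) = 0 := by
    calc ∑ k : {k : Fin κ // r k = s},
        a k • (f k.1 ≫ eqToHom (congrArg (fun t => Xo⟦t⟧) k.2))
        = χ ≫ (twEv f)⟦s⟧' := by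
          rw [← ha, Preadditive.sum_comp]
          exact Finset.sum_congr rfl fun k _ => by
            rw [Linear.smul_comp, tU_comp_ev' f s k.1 k.2]
      _ = 0 := hχ
  have hz := Fintype.linearIndependent_iff.mp (hbasis s).1 a hsum
  rw [← ha]
  exact Finset.sum_eq_zero fun k _ => by rw [hz k, zero_smul]

private lemma ev_surj (hE : IsExceptional E) (f : ∀ j, E ⟶ Xo⟦r j⟧)
    (hbasis : ∀ s : ℤ,
      LinearIndependent (ZMod 2)
        (fun j : {j : Fin κ // r j = s} =>
          f j.1 ≫ eqToHom (congrArg (fun t => Xo⟦t⟧) j.2)) ∧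
      Submodule.span (ZMod 2)
        (Set.range (fun j : {j : Fin κ // r j = s} =>
          f j.1 ≫ eqToHom (congrArg (fun t => Xo⟦t⟧) j.2))) = ⊤)
    (s : ℤ) (ψ : E ⟶ Xo⟦s⟧) :
    ∃ χ : E ⟶ (⨁ fun k => E⟦-r k⟧)⟦s⟧, χ ≫ (twEv f)⟦s⟧' = ψ := by
  have hψ : ψ ∈ Submodule.span (ZMod 2)
      (Set.range (fun j : {j : Fin κ // r j = s} =>
        f j.1 ≫ eqToHom (congrArg (fun t => Xo⟦t⟧) j.2))) := by
    rw [(hbasis s).2]; trivial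
  obtain ⟨a, ha⟩ := (Submodule.mem_span_range_iff_exists_fun (ZMod 2)).mp hψ
  refine ⟨∑ k : {k : Fin κ // r k = s},
    a k • (tU E r k.1 ≫ eqToHom (congrArg (fun t => (⨁ fun l => E⟦-r l⟧)⟦t⟧) k.2)), ?_⟩
  rw [Preadditive.sum_comp, ← ha]
  exact Finset.sum_congr rfl fun k _ => by rw [Linear.smul_comp, tU_comp_ev' f s k.1 k.2]

end Twist2

/-- Key vanishing: `Hom^*(E, T_E(Xo)) = 0`. -/
lemma HomZero.of_isTwist {E Xo To : C} (hE : IsExceptional E) (ht : IsTwist E Xo To) :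
    HomZero E To := by
  obtain ⟨κ, r, f, hbasis, g, h, hdist⟩ := ht
  intro s φ
  set T : Triangle C := Triangle.mk (twEv f) g h with hTdef
  have hTs := shiftTriangle_distinguished T hdist s
  set Ts : Triangle C := Triangle.mk (T.mor₁⟦s⟧') (T.mor₂⟦s⟧')
      (T.mor₃⟦s⟧' ≫ (shiftFunctorComm C 1 s).hom.app T.obj₁) with hTsdef
  -- φ : E ⟶ To⟦s⟧ = Ts.obj₃
  have hξ : φ ≫ Ts.mor₃ = 0 := by
    set ξ : E ⟶ ((⨁ fun k => E⟦-r k⟧)⟦s⟧)⟦(1:ℤ)⟧ := φ ≫ Ts.mor₃ with hxidef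
    have hcomp : ξ ≫ (T.mor₁⟦s⟧')⟦(1:ℤ)⟧' = 0 := by
      have hz := comp_distTriang_mor_zero₃₁ _ hTs
      rw [hxidef]; refine (assoc _ _ _).trans ?_
      have : Ts.mor₃ ≫ (T.mor₁⟦s⟧')⟦(1:ℤ)⟧' = 0 := hz
      exact (congrArg (φ ≫ ·) this).trans comp_zero
    have hnat := (shiftFunctorAdd' C s 1 (s+1) rfl).inv.naturality T.mor₁
    have hξ' : (ξ ≫ (shiftFunctorAdd' C s 1 (s+1) rfl).inv.app (⨁ fun k => E⟦-r k⟧)) ≫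
        (twEv f)⟦s+1⟧' = 0 := by
      rw [assoc]
      have : (shiftFunctorAdd' C s 1 (s+1) rfl).inv.app (⨁ fun k => E⟦-r k⟧) ≫
          (twEv f)⟦s+1⟧' =
          (T.mor₁⟦s⟧')⟦(1:ℤ)⟧' ≫ (shiftFunctorAdd' C s 1 (s+1) rfl).inv.app Xo := by
        exact (hnat).symm
      rw [this]; exact (assoc _ _ _).symm.trans ((congrArg (· ≫ _) hcomp).trans zero_comp)
    have := ev_inj hE f hbasis (s+1) _ hξ'
    rw [hxidef] at this
    exact (cancel_mono ((shiftFunctorAdd' C s 1 (s+1) rfl).inv.app (⨁ fun k => E⟦-r k⟧))).mp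
      (this.trans zero_comp.symm)
  obtain ⟨ψ, hψ⟩ := Triangle.coyoneda_exact₃ _ hTs φ hξ
  obtain ⟨χ, hχ⟩ := ev_surj hE f hbasis s ψ
  rw [hψ, ← hχ]
  have : (twEv f)⟦s⟧' = Ts.mor₁ := rfl
  exact (assoc _ _ _).trans ((congrArg (χ ≫ ·) (comp_distTriang_mor_zero₁₂ _ hTs)).trans comp_zero)

/-- `Hom^*(A, B) = 0` for the biproduct of shifts of `E`, given `Hom^*(A,E) = 0`. -/
private lemma homZero_B_right {A E : C} {κ : ℕ} {r : Fin κ → ℤ} (h : HomZero A E) :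
    HomZero A (⨁ fun j => E⟦-r j⟧) :=
  HomZero.biproduct_right fun j => h.shift_right (-r j)

private lemma homZero_B_left {Z E : C} {κ : ℕ} {r : Fin κ → ℤ} (h : HomZero E Z) :
    HomZero (⨁ fun j => E⟦-r j⟧) Z :=
  HomZero.biproduct_left fun j => h.shift_left (-r j)

/-- vanishing out of the twist. -/
lemma HomZero.isTwist_left {E Xo To Z : C} (hEZ : HomZero E Z) (hXZ : HomZero Xo Z)
    (ht : IsTwist E Xo To) : HomZero To Z := by
  obtain ⟨κ, r, f, hbasis, g, h, hdist⟩ := ht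
  exact HomZero.triangle₃' hdist (homZero_B_left hEZ) hXZ

/-- vanishing into the twist. -/
lemma HomZero.isTwist_right {E Xo To A : C} (hAE : HomZero A E) (hAX : HomZero A Xo)
    (ht : IsTwist E Xo To) : HomZero A To := by
  obtain ⟨κ, r, f, hbasis, g, h, hdist⟩ := ht
  exact HomZero.triangle₃ hdist (homZero_B_right hAE) hAX

/-- the twist of an exceptional object along an exceptional object is exceptional. -/
lemma IsExceptional.isTwist {E Xo To : C} (hE : IsExceptional E) (hXo : IsExceptional Xo)
    (hXE : HomZero Xo E) (ht : IsTwist E Xo To) : IsExceptional To := by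
  have hET : HomZero E To := HomZero.of_isTwist hE ht
  obtain ⟨κ, r, f, hbasis, g, h, hdist⟩ := ht
  set T : Triangle C := Triangle.mk (twEv f) g h with hTdef
  have hXB : HomZero Xo (⨁ fun j => E⟦-r j⟧) := homZero_B_right hXE
  have hBT : HomZero (⨁ fun j => E⟦-r j⟧) To := homZero_B_left hET
  -- Hom(Xo, To⟦s⟧) vanishes for s ≠ 0
  have hXT : ∀ s : ℤ, s ≠ 0 → ∀ ψ : Xo ⟶ To⟦s⟧, ψ = 0 := by
    intro s hs ψ
    have hTs := shiftTriangle_distinguished T hdist s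
    have hψ3 : ψ ≫ (T.mor₃⟦s⟧' ≫ (shiftFunctorComm C 1 s).hom.app T.obj₁) = 0 := by
      rw [← assoc]
      exact (hXB.shift_right s) 1 _
    obtain ⟨ψ', hψ'⟩ := Triangle.coyoneda_exact₃ _ hTs ψ hψ3
    rw [hψ']; obtain rfl := hXo.1 s hs ψ'; exact zero_comp
  -- injectivity of composition with g on Hom(To, Z) for Z with HomZero B Z... (plain homs)
  have hinj : ∀ (Z : C) (_ : HomZero (⨁ fun j => E⟦-r j⟧) Z) (φ₁ φ₂ : To ⟶ Z),
      g ≫ φ₁ = g ≫ φ₂ → φ₁ = φ₂ := by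
    intro Z hBZ φ₁ φ₂ hgφ
    have h0 : T.mor₂ ≫ (φ₁ - φ₂) = 0 := by
      have : T.mor₂ = g := rfl
      show g ≫ (φ₁ - φ₂) = 0; rw [Preadditive.comp_sub, hgφ, sub_self]
    obtain ⟨ψ, hψ⟩ := Triangle.yoneda_exact₃ T hdist _ h0
    have : ψ = 0 := (hBZ.shift_left 1).zero' ψ
    rw [this, comp_zero] at hψ
    exact sub_eq_zero.mp hψ
  constructor
  · -- no self-exts
    intro s hs φ
    have h0 : T.mor₂ ≫ φ = 0 := hXT s hs (g ≫ φ)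
    obtain ⟨ψ, hψ⟩ := Triangle.yoneda_exact₃ T hdist φ h0
    rw [hψ]; obtain rfl := (hBT.shift_left 1) s ψ; exact comp_zero
  constructor
  · -- 𝟙 To ≠ 0
    intro hTo
    have hg : g = 0 := by
      have : g ≫ 𝟙 To = g := comp_id g
      rw [hTo, comp_zero] at this
      exact this.symm
    -- then 𝟙 Xo = 0, contradiction
    have h0 : (𝟙 Xo) ≫ T.mor₂ = 0 := by
      have : T.mor₂ = g := rfl
      show 𝟙 Xo ≫ g = 0; rw [hg, comp_zero]
    obtain ⟨c, hc⟩ := Triangle.coyoneda_exact₂ T hdist _ h0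
    have : c = 0 := hXB.zero' c
    rw [this, zero_comp] at hc
    exact hXo.2.1 hc
  · -- Hom(To,To) spanned by identity
    refine (Submodule.eq_top_iff'.mpr fun φ => ?_)
    -- g ≫ φ factors as ψ' ≫ g
    have h3 : (g ≫ φ) ≫ T.mor₃ = 0 := hXB 1 _
    obtain ⟨ψ', hψ'⟩ : ∃ ψ' : Xo ⟶ Xo, g ≫ φ = ψ' ≫ g := Triangle.coyoneda_exact₃ T hdist _ h3
    have : (ψ' : Xo ⟶ Xo) ∈ Submodule.span (ZMod 2) {𝟙 Xo} := by rw [hXo.2.2]; trivial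
    obtain ⟨a, ha⟩ := Submodule.mem_span_singleton.mp this
    have heq : g ≫ φ = g ≫ (a • 𝟙 To) := by
      have : T.mor₂ = g := rfl
      rw [hψ']; show ψ' ≫ g = _; rw [← ha, Linear.smul_comp, Linear.comp_smul, id_comp, comp_id]
    have := hinj To hBT φ (a • 𝟙 To) heq
    rw [this]
    exact Submodule.smul_mem _ a (Submodule.subset_span rfl)

/-- decomposition of a `Fin (n+1)`-indexed biproduct. -/
private noncomputable def biproductFinSuccIso (n : ℕ) (G : Fin (n + 1) → C) :
    (⨁ G) ≅ (G 0 ⊞ ⨁ fun j : Fin n => G j.succ) where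
  hom := biprod.lift (biproduct.π G 0) (biproduct.lift fun j => biproduct.π G j.succ)
  inv := biprod.desc (biproduct.ι G 0) (biproduct.desc fun j => biproduct.ι G j.succ)
  hom_inv_id := by
    ext j k
    rcases Fin.eq_zero_or_eq_succ j with hj | ⟨j', rfl⟩ <;>
      rcases Fin.eq_zero_or_eq_succ k with hk | ⟨k', rfl⟩ <;>
      subst_vars <;>
      simp [biproduct.lift_desc, Preadditive.comp_sum, Preadditive.sum_comp,
        biproduct.ι_π, biproduct.ι_π_assoc, Fin.succ_ne_zero, (Fin.succ_ne_zero _).symm,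
        Fin.succ_inj, comp_dite, dite_comp, Finset.sum_dite_eq, Finset.sum_dite_eq, eqToHom_trans]
  inv_hom_id := by
    ext <;>
      simp [biproduct.lift_desc, Preadditive.comp_sum, Preadditive.sum_comp,
        biproduct.ι_π, biproduct.ι_π_assoc, Fin.succ_ne_zero, (Fin.succ_ne_zero _).symm,
        Fin.succ_inj, comp_dite, dite_comp, Finset.sum_dite_eq, Finset.sum_dite_eq, eqToHom_trans]

private lemma subcategory_biproduct {S : ObjectProperty C} [S.IsTriangulated]
    [S.IsClosedUnderIsomorphisms] {n : ℕ} (G : Fin n → C) (h : ∀ j, S (G j)) :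
    S (⨁ G) := by
  induction n with
  | zero =>
    have hz : IsZero (⨁ G) := by
      rw [IsZero.iff_id_eq_zero]
      apply biproduct.hom_ext
      intro j
      exact j.elim0
    exact S.prop_of_iso hz.isoZero.symm S.prop_zero
  | succ n ih =>
    have h0 : S (G 0 ⊞ ⨁ fun j : Fin n => G j.succ) :=
      S.ext_of_isTriangulatedClosed₂ _ (binaryBiproductTriangle_distinguished (G 0) (⨁ fun j : Fin n => G j.succ))
        (h 0) (ih _ fun j => h j.succ)
    exact S.prop_of_iso (biproductFinSuccIso n G).symm h0

/-- if `(X⁰, …, Xᵐ)` is a full exceptional collection, so is the mutated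
collection `(T_{X⁰}(X¹), …, T_{X⁰}(Xᵐ), X⁰)`. -/
theorem full_exceptional_of_cyclic_mutation
    (hfin : ∀ X Y : C, (∀ r : ℤ, Module.Finite (ZMod 2) (X ⟶ Y⟦r⟧)) ∧
      {r : ℤ | ∃ f : X ⟶ Y⟦r⟧, f ≠ 0}.Finite)
    {m : ℕ} (X Y : Fin (m + 1) → C)
    (hexc : IsExceptionalCollection X) (hfull : IsFullCollection X)
    (hY : ∀ i : Fin m, IsTwist (X 0) (X i.succ) (Y i.castSucc))
    (hYlast : Y (Fin.last m) = X 0) :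
    IsExceptionalCollection Y ∧ IsFullCollection Y := by
  obtain ⟨hX1, hX2⟩ := hexc
  have hE : IsExceptional (X 0) := hX1 0
  have hXE : ∀ i : Fin m, HomZero (X i.succ) (X 0) :=
    fun i s φ => hX2 i.succ 0 (Fin.succ_pos i) s φ
  have hXX : ∀ i k : Fin m, k < i → HomZero (X i.succ) (X k.succ) :=
    fun i k hk s φ => hX2 i.succ k.succ (Fin.succ_lt_succ_iff.mpr hk) s φ
  have hKV : ∀ i : Fin m, HomZero (X 0) (Y i.castSucc) :=
    fun i => HomZero.of_isTwist hE (hY i)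
  have hYY : ∀ a b : Fin m, b < a → HomZero (Y a.castSucc) (Y b.castSucc) := fun a b hba =>
    HomZero.isTwist_left (hKV b)
      (HomZero.isTwist_right (hXE a) (hXX a b hba) (hY b)) (hY a)
  refine ⟨⟨?_, ?_⟩, ?_⟩
  · -- each object is exceptional
    intro i
    induction i using Fin.lastCases with
    | last => rw [hYlast]; exact hE
    | cast a => exact IsExceptional.isTwist hE (hX1 a.succ) (hXE a) (hY a)
  · -- downward vanishing
    intro i k hk
    show HomZero (Y i) (Y k)
    have hkl : k ≠ Fin.last m := (lt_of_lt_of_le hk (Fin.le_last i)).ne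
    obtain ⟨b, hb⟩ := Fin.exists_castSucc_eq.mpr hkl
    subst hb
    by_cases hi : i = Fin.last m
    · subst hi; rw [hYlast]; exact hKV b
    · obtain ⟨a, ha⟩ := Fin.exists_castSucc_eq.mpr hi
      subst ha
      exact hYY a b (Fin.castSucc_lt_castSucc_iff.mp hk)
  · -- fullness
    intro S hS hios hSY Z
    haveI : S.IsClosedUnderIsomorphisms := hios
    have hP0 : S (X 0) := by rw [← hYlast]; exact hSY _
    have hPX : ∀ i, S (X i) := by
      intro i
      induction i using Fin.cases with
      | zero => exact hP0
      | succ a =>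
        obtain ⟨κ, r, f, hbasis, g, h, hdist⟩ := hY a
        have hB : S (⨁ fun j => (X 0)⟦-r j⟧) :=
          subcategory_biproduct _ fun j => S.le_shift _ _ hP0
        exact S.ext_of_isTriangulatedClosed₂ _ hdist hB (hSY a.castSucc)
    exact hfull S hS hios hPX Z
end

section
/- Let X be an exceptional object of 𝒞 and Y any object. Then Hom(X, T_X(Y)[r]) = 0 for every r ∈ ℤ. -/
open CategoryTheory Category Limits Pretriangulated

universe v u

variable (C : Type u) [Category.{v} C] [Preadditive C] [HasZeroObject C]
  [HasShift C ℤ] [∀ n : ℤ, (shiftFunctor C n).Additive] [Pretriangulated C]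
  [CategoryTheory.Linear (ZMod 2) C] [HasFiniteBiproducts C]

variable {C}

set_option linter.unusedSectionVars false


-- char 2 facts
lemma char2_hom_neg {A B : C} (z : A ⟶ B) : -z = z := by
  have h2 : (2 : ZMod 2) • z = z + z := two_smul _ z
  rw [show (2 : ZMod 2) = 0 by decide, zero_smul] at h2
  exact neg_eq_of_add_eq_zero_left h2.symm

lemma char2_units_smul {A B : C} (ε : ℤˣ) (z : A ⟶ B) : ε • z = z := by
  rcases Int.units_eq_one_or ε with h | h <;> subst h
  · rw [one_smul]
  · rw [Units.smul_def, Units.val_neg, Units.val_one, neg_smul, one_smul, char2_hom_neg]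

section Aux

variable (X Y : C) {κ : ℕ} (r : Fin κ → ℤ) (f : ∀ j, X ⟶ Y⟦r j⟧)

noncomputable def eMap (s : ℤ) (j : Fin κ) (hj : r j = s) :
    X ⟶ (⨁ fun j => X⟦-r j⟧)⟦s⟧ :=
  (shiftFunctorCompIsoId C (-r j) s (by rw [← hj]; exact neg_add_cancel _)).inv.app X ≫
    (biproduct.ι (fun j => X⟦-r j⟧) j)⟦s⟧'

lemma eMap_comp_ev (s : ℤ) (j : Fin κ) (hj : r j = s) :
    eMap X r s j hj ≫
      (biproduct.desc fun j =>
        (f j)⟦-r j⟧' ≫ (shiftFunctorCompIsoId C (r j) (-r j) (add_neg_cancel _)).hom.app Y)⟦s⟧' =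
      f j ≫ eqToHom (congrArg (fun t => Y⟦t⟧) hj) := by
  subst hj
  simp only [eqToHom_refl, comp_id]
  dsimp [eMap]
  rw [assoc, ← Functor.map_comp, biproduct.ι_desc, Functor.map_comp,
    shift_shiftFunctorCompIsoId_add_neg_cancel_hom_app]
  have hnat := (shiftFunctorCompIsoId C (-r j) (r j) (neg_add_cancel _)).inv.naturality (f j)
  dsimp at hnat
  rw [← assoc, ← hnat, assoc, Iso.inv_hom_id_app]
  simp

end Aux

section Aux2

variable (X Y : C) {κ : ℕ} (r : Fin κ → ℤ) (f : ∀ j, X ⟶ Y⟦r j⟧)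

lemma mem_span_eMap (hX : IsExceptional X) (s : ℤ) (u : X ⟶ (⨁ fun j => X⟦-r j⟧)⟦s⟧) :
    ∃ c : {j : Fin κ // r j = s} → ZMod 2,
      ∑ j : {j : Fin κ // r j = s}, c j • eMap X r s j.1 j.2 = u := by
  classical
  rw [← Submodule.mem_span_range_iff_exists_fun]
  let F := shiftFunctor C s
  let E := fun j : Fin κ => X⟦-r j⟧
  let β : F.obj (⨁ E) ≅ ⨁ (F.obj ∘ E) := F.mapBiproduct E
  have hu : u = ∑ j : Fin κ,
      (u ≫ β.hom ≫ biproduct.π (F.obj ∘ E) j) ≫ biproduct.ι (F.obj ∘ E) j ≫ β.inv := by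
    have htot := biproduct.total (f := F.obj ∘ E)
    calc u = u ≫ β.hom ≫ (∑ j : Fin κ, biproduct.π (F.obj ∘ E) j ≫ biproduct.ι _ j) ≫ β.inv := by
            rw [htot, id_comp, Iso.hom_inv_id, comp_id]
      _ = _ := by
            rw [Preadditive.sum_comp, Preadditive.comp_sum, Preadditive.comp_sum]
            congr 1; funext j; simp [assoc]
  rw [hu]
  apply Submodule.sum_mem
  intro j _
  have hβ : biproduct.ι (F.obj ∘ E) j ≫ β.inv = F.map (biproduct.ι E j) := by
    show biproduct.ι (F.obj ∘ E) j ≫ (F.mapBiproduct E).inv = F.map (biproduct.ι E j)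
    rw [Functor.mapBiproduct_inv, biproduct.ι_desc]
  by_cases hj : r j = s
  · have hzero : (-r j) + s = 0 := by rw [← hj]; exact neg_add_cancel _
    set w := (u ≫ β.hom ≫ biproduct.π (F.obj ∘ E) j) ≫
      (shiftFunctorCompIsoId C (-r j) s hzero).hom.app X with hw
    obtain ⟨a, ha⟩ := Submodule.mem_span_singleton.mp (hX.2.2 ▸ Submodule.mem_top (x := w))
    have hvj : u ≫ β.hom ≫ biproduct.π (F.obj ∘ E) j =
        a • (shiftFunctorCompIsoId C (-r j) s hzero).inv.app X := by
      have h1 : u ≫ β.hom ≫ biproduct.π (F.obj ∘ E) j =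
          w ≫ (shiftFunctorCompIsoId C (-r j) s hzero).inv.app X := by
        rw [hw]; simp [assoc]
        exact (comp_id (u ≫ β.hom ≫ biproduct.π (F.obj ∘ E) j)).symm.trans (by rw [assoc, assoc]; exact rfl)
      rw [h1, ← ha, Linear.smul_comp, id_comp]
    rw [hβ]
    have heq : (u ≫ β.hom ≫ biproduct.π (F.obj ∘ E) j) ≫ F.map (biproduct.ι E j)
        = a • eMap X r s j hj := by
      rw [hvj, Linear.smul_comp]; rfl
    rw [heq]
    exact Submodule.smul_mem _ a (Submodule.subset_span ⟨⟨j, hj⟩, rfl⟩)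
  · have h0 : (u ≫ β.hom ≫ biproduct.π (F.obj ∘ E) j) ≫
        (shiftFunctorAdd' C (-r j) s ((-r j) + s) rfl).inv.app X = 0 :=
      hX.1 _ (fun hc => hj (by omega)) _
    have hvj : u ≫ β.hom ≫ biproduct.π (F.obj ∘ E) j = 0 := by
      have h2 := congrArg (· ≫ (shiftFunctorAdd' C (-r j) s ((-r j) + s) rfl).hom.app X) h0
      simp [assoc, Iso.inv_hom_id_app] at h2
      exact (comp_id (u ≫ β.hom ≫ biproduct.π (F.obj ∘ E) j)).symm.trans (by rw [assoc, assoc]; exact h2)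
    rw [← assoc, hvj, zero_comp, zero_comp]
    exact Submodule.zero_mem _

end Aux2

section Aux3

variable (X Y : C) {κ : ℕ} (r : Fin κ → ℤ) (f : ∀ j, X ⟶ Y⟦r j⟧)

lemma twist_surj (s : ℤ)
    (hspan : Submodule.span (ZMod 2)
      (Set.range (fun j : {j : Fin κ // r j = s} =>
        f j.1 ≫ eqToHom (congrArg (fun t => Y⟦t⟧) j.2))) = ⊤)
    (ψ : X ⟶ Y⟦s⟧) :
    ∃ u : X ⟶ (⨁ fun j => X⟦-r j⟧)⟦s⟧,
      u ≫ (biproduct.desc fun j =>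
        (f j)⟦-r j⟧' ≫ (shiftFunctorCompIsoId C (r j) (-r j) (add_neg_cancel _)).hom.app Y)⟦s⟧' = ψ := by
  classical
  have hmem : ψ ∈ Submodule.span (ZMod 2)
      (Set.range (fun j : {j : Fin κ // r j = s} =>
        f j.1 ≫ eqToHom (congrArg (fun t => Y⟦t⟧) j.2))) := hspan ▸ Submodule.mem_top
  obtain ⟨c, hc⟩ := (Submodule.mem_span_range_iff_exists_fun (ZMod 2)).mp hmem
  refine ⟨∑ j : {j : Fin κ // r j = s}, c j • eMap X r s j.1 j.2, ?_⟩
  rw [Preadditive.sum_comp, ← hc]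
  apply Finset.sum_congr rfl
  intro j _
  rw [Linear.smul_comp, eMap_comp_ev]

lemma twist_inj (hX : IsExceptional X) (s : ℤ)
    (hli : LinearIndependent (ZMod 2)
      (fun j : {j : Fin κ // r j = s} =>
        f j.1 ≫ eqToHom (congrArg (fun t => Y⟦t⟧) j.2)))
    (u : X ⟶ (⨁ fun j => X⟦-r j⟧)⟦s⟧)
    (hu : u ≫ (biproduct.desc fun j =>
        (f j)⟦-r j⟧' ≫ (shiftFunctorCompIsoId C (r j) (-r j) (add_neg_cancel _)).hom.app Y)⟦s⟧'
      = 0) :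
    u = 0 := by
  classical
  obtain ⟨c, hc⟩ := mem_span_eMap X r hX s u
  have hsum : ∑ j : {j : Fin κ // r j = s},
      c j • (f j.1 ≫ eqToHom (congrArg (fun t => Y⟦t⟧) j.2)) = 0 := by
    rw [← hu, ← hc, Preadditive.sum_comp]
    apply Finset.sum_congr rfl
    intro j _
    rw [Linear.smul_comp, eMap_comp_ev]
  have hc0 := Fintype.linearIndependent_iff.mp hli c hsum
  rw [← hc]
  apply Finset.sum_eq_zero
  intro j _
  rw [hc0 j, zero_smul]

end Aux3

/-- if `X` is exceptional, then `Hom(X, T_X(Y)[r]) = 0` for all `r ∈ ℤ`. -/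
theorem hom_to_twist_vanishes
    (hfin : ∀ X Y : C, (∀ r : ℤ, Module.Finite (ZMod 2) (X ⟶ Y⟦r⟧)) ∧
      {r : ℤ | ∃ f : X ⟶ Y⟦r⟧, f ≠ 0}.Finite)
    (X Y T : C) (hX : IsExceptional X) (hT : IsTwist X Y T) :
    ∀ (r : ℤ) (f : X ⟶ T⟦r⟧), f = 0 := by
  obtain ⟨κ, r, f, hb, g, h, hdist⟩ := hT
  intro ρ φ
  set ev : (⨁ fun j => X⟦-r j⟧) ⟶ Y := biproduct.desc fun j =>
      (f j)⟦-r j⟧' ≫ (shiftFunctorCompIsoId C (r j) (-r j) (add_neg_cancel _)).hom.app Y with hev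
  have hdist' : (Triangle.shiftFunctor C ρ).obj (Triangle.mk ev g h) ∈ distTriang C :=
    Pretriangulated.Triangle.shift_distinguished _ hdist ρ
  have z31 : (ρ.negOnePow • ((shiftFunctor C ρ).map h ≫
      (shiftFunctorComm C 1 ρ).hom.app (⨁ fun j => X⟦-r j⟧))) ≫
      (shiftFunctor C 1).map (ρ.negOnePow • (shiftFunctor C ρ).map ev) = 0 :=
    comp_distTriang_mor_zero₃₁ _ hdist'
  rw [Linear.units_smul_comp, Functor.map_units_smul, Linear.comp_units_smul,
    char2_units_smul, char2_units_smul, assoc] at z31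
  have hδ0 : φ ≫ (shiftFunctor C ρ).map h ≫
      (shiftFunctorComm C 1 ρ).hom.app (⨁ fun j => X⟦-r j⟧) ≫
      (shiftFunctorAdd' C ρ 1 (ρ+1) rfl).inv.app (⨁ fun j => X⟦-r j⟧) = 0 := by
    refine twist_inj X Y r f hX (ρ+1) (hb (ρ+1)).1 _ ?_
    have hnat := (shiftFunctorAdd' C ρ 1 (ρ+1) rfl).inv.naturality ev
    dsimp at hnat
    show (φ ≫ (shiftFunctor C ρ).map h ≫
        (shiftFunctorComm C 1 ρ).hom.app (⨁ fun j => X⟦-r j⟧) ≫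
        (shiftFunctorAdd' C ρ 1 (ρ+1) rfl).inv.app (⨁ fun j => X⟦-r j⟧)) ≫
        (shiftFunctor C (ρ+1)).map ev = 0
    rw [assoc, assoc, assoc, ← hnat]
    rw [reassoc_of% z31]
    simp
  have hmor3 : φ ≫ ((Triangle.shiftFunctor C ρ).obj (Triangle.mk ev g h)).mor₃ = 0 := by
    change φ ≫ (ρ.negOnePow • ((shiftFunctor C ρ).map h ≫
      (shiftFunctorComm C 1 ρ).hom.app (⨁ fun j => X⟦-r j⟧))) = 0
    rw [Linear.comp_units_smul, char2_units_smul]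
    have h2 := congrArg
      (· ≫ (shiftFunctorAdd' C ρ 1 (ρ+1) rfl).hom.app (⨁ fun j => X⟦-r j⟧)) hδ0
    simpa [assoc] using h2
  obtain ⟨ψ, hψ⟩ := Triangle.coyoneda_exact₃ _ hdist' φ hmor3
  obtain ⟨u, hu⟩ := twist_surj X Y r f ρ (hb ρ).2 ψ
  have z12 : ev ≫ g = 0 := comp_distTriang_mor_zero₁₂ _ hdist
  rw [hψ]
  rw [← hu]
  change (u ≫ (shiftFunctor C ρ).map ev) ≫ (ρ.negOnePow • (shiftFunctor C ρ).map g) = 0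
  rw [Linear.comp_units_smul, char2_units_smul, assoc]
  show u ≫ (shiftFunctor C ρ).map ev ≫ (shiftFunctor C ρ).map g = 0
  rw [← Functor.map_comp, z12, Functor.map_zero, comp_zero]
end

section
/- Let X be an exceptional object of 𝒞 and Y an object with Hom(Y, X[r]) = 0 for all r ∈ ℤ. Then for every r ∈ ℤ one has dim_{𝔽₂} Hom(T_X(Y), X[r]) = dim_{𝔽₂} Hom(X, Y[1−r]). (This is the identification hom(Yⁱ, Yᵐ) = hom(X¹, X^{i+1})^∨[−1] appearing in the c-move on directed categories.) -/
open CategoryTheory Category Limits Pretriangulated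

universe v u

variable (C : Type u) [Category.{v} C] [Preadditive C] [HasZeroObject C]
  [HasShift C ℤ] [∀ n : ℤ, (shiftFunctor C n).Additive] [Pretriangulated C]
  [CategoryTheory.Linear (ZMod 2) C] [HasFiniteBiproducts C]

variable {C}

/-- Any additive equivalence of `ZMod 2`-modules is linear. -/
noncomputable def AddEquiv.toZMod2LinearEquiv {M N : Type*} [AddCommGroup M] [AddCommGroup N]
    [Module (ZMod 2) M] [Module (ZMod 2) N] (e : M ≃+ N) : M ≃ₗ[ZMod 2] N :=
  e.toLinearEquiv (fun c x => ZMod.map_smul e c x)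

/-- Hom equivalence by composing with isomorphisms. -/
@[simps!]
noncomputable def homIsoAddEquiv {P P' Q Q' : C} (e : P' ≅ P) (e' : Q ≅ Q') :
    (P ⟶ Q) ≃+ (P' ⟶ Q') where
  toFun g := e.hom ≫ g ≫ e'.hom
  invFun g := e.inv ≫ g ≫ e'.inv
  left_inv g := by simp
  right_inv g := by simp
  map_add' g g' := by simp

/-- The shift functor gives an additive equivalence on hom groups. -/
noncomputable def shiftHomAddEquiv (n : ℤ) (P Q : C) :
    (P ⟶ Q) ≃+ ((P⟦n⟧ : C) ⟶ (Q⟦n⟧ : C)) :=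
  AddEquiv.mk' (Functor.FullyFaithful.ofFullyFaithful (shiftFunctor C n)).homEquiv
    (fun _ _ => Functor.map_add _)

/-- Hom out of a biproduct is the product of the homs. -/
noncomputable def biprodHomAddEquiv {J : Type} [Fintype J] (Z : J → C) (W : C) :
    ((⨁ Z) ⟶ W) ≃+ (∀ j, Z j ⟶ W) :=
  AddEquiv.mk'
    ⟨fun g j => biproduct.ι Z j ≫ g, fun φ => biproduct.desc φ,
      fun g => by ext j; simp, fun φ => by funext j; simp⟩
    (fun g g' => by funext j; simp)

/-- if `X` is exceptional and `Hom(Y, X[r]) = 0` for all `r`, then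
`dim Hom(T_X(Y), X[r]) = dim Hom(X, Y[1 - r])` for every `r ∈ ℤ`. -/
theorem dim_hom_twist_to_X
    (hfin : ∀ X Y : C, (∀ r : ℤ, Module.Finite (ZMod 2) (X ⟶ Y⟦r⟧)) ∧
      {r : ℤ | ∃ f : X ⟶ Y⟦r⟧, f ≠ 0}.Finite)
    (X Y T : C) (hX : IsExceptional X)
    (hY : ∀ (r : ℤ) (f : Y ⟶ X⟦r⟧), f = 0)
    (hT : IsTwist X Y T) (r : ℤ) :
    Module.finrank (ZMod 2) (T ⟶ X⟦r⟧) = Module.finrank (ZMod 2) (X ⟶ Y⟦1 - r⟧) := by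
  obtain ⟨κ, r', f, hbasis, g, h, hdist⟩ := hT
  -- every map Y⟦a⟧ ⟶ X⟦b⟧ vanishes
  have hzero : ∀ (a b : ℤ) (χ : (Y⟦a⟧ : C) ⟶ (X⟦b⟧ : C)), χ = 0 := by
    intro a b χ
    have h1 : χ ≫ ((shiftFunctorAdd' C (b - a) a b (by ring)).app X).hom = 0 := by
      obtain ⟨χ', hχ'⟩ := (shiftFunctor C a).map_surjective
        (χ ≫ ((shiftFunctorAdd' C (b - a) a b (by ring)).app X).hom)
      rw [← hχ', hY _ χ', Functor.map_zero]
    calc χ = (χ ≫ ((shiftFunctorAdd' C (b - a) a b (by ring)).app X).hom) ≫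
          ((shiftFunctorAdd' C (b - a) a b (by ring)).app X).inv := by simp
    _ = 0 := by rw [h1, zero_comp]
  -- the long exact sequence: precomposition with h is bijective
  have hbij : Function.Bijective
      (fun ψ : (((⨁ fun j => (X⟦-r' j⟧ : C))⟦(1:ℤ)⟧ : C) ⟶ X⟦r⟧) => h ≫ ψ) := by
    constructor
    · intro ψ ψ' hψ
      have key : ∀ ψ₀ : (((⨁ fun j => (X⟦-r' j⟧ : C))⟦(1:ℤ)⟧ : C) ⟶ X⟦r⟧),
          h ≫ ψ₀ = 0 → ψ₀ = 0 := by
        intro ψ₀ hψ₀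
        obtain ⟨χ, hχ⟩ := Triangle.yoneda_exact₃ _ (rot_of_distTriang _ hdist) ψ₀ hψ₀
        have hχ0 : χ = 0 := hzero 1 r χ
        rw [hχ, hχ0, comp_zero]
        rfl
      have := key (ψ - ψ') (by rw [Preadditive.comp_sub]; exact sub_eq_zero.2 hψ)
      rwa [sub_eq_zero] at this
    · intro φ₀
      obtain ⟨ψ, hψ⟩ := Triangle.yoneda_exact₃ _ hdist φ₀ (hY r (g ≫ φ₀))
      exact ⟨ψ, hψ.symm⟩
  let E1 : (((⨁ fun j => (X⟦-r' j⟧ : C))⟦(1:ℤ)⟧ : C) ⟶ X⟦r⟧) ≃ₗ[ZMod 2] (T ⟶ X⟦r⟧) :=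
    LinearEquiv.ofBijective
      (AddMonoidHom.toZModLinearMap 2 (AddMonoidHom.mk' (fun ψ => h ≫ ψ)
        (fun a b => by simp [Preadditive.comp_add]))) hbij
  -- the chain of equivalences down to a product of Hom(X, X[m j])
  let m : Fin κ → ℤ := fun j => r - 1 + r' j
  let E2 : (((⨁ fun j => (X⟦-r' j⟧ : C))⟦(1:ℤ)⟧ : C) ⟶ X⟦r⟧) ≃+
      ((⨁ fun j => (X⟦-r' j⟧ : C)) ⟶ ((X⟦r⟧ : C)⟦(-1:ℤ)⟧ : C)) :=
    (shiftHomAddEquiv (-1 : ℤ) _ _).trans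
      (homIsoAddEquiv
        (((shiftFunctorCompIsoId C (1:ℤ) (-1:ℤ) (by ring)).app
          (⨁ fun j => (X⟦-r' j⟧ : C))).symm) (Iso.refl _))
  let E3 : ((⨁ fun j => (X⟦-r' j⟧ : C)) ⟶ ((X⟦r⟧ : C)⟦(-1:ℤ)⟧ : C)) ≃+
      (∀ j, (X⟦-r' j⟧ : C) ⟶ ((X⟦r⟧ : C)⟦(-1:ℤ)⟧ : C)) :=
    biprodHomAddEquiv _ _
  let E4 : ∀ j, ((X⟦-r' j⟧ : C) ⟶ ((X⟦r⟧ : C)⟦(-1:ℤ)⟧ : C)) ≃+ (X ⟶ (X⟦m j⟧ : C)) :=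
    fun j =>
      (shiftHomAddEquiv (r' j) _ _).trans
        (homIsoAddEquiv (((shiftFunctorCompIsoId C (-r' j) (r' j) (by ring)).app X).symm)
          ((((shiftFunctor C (r' j)).mapIso
              ((shiftFunctorAdd' C r (-1) (r - 1) (by ring)).app X)).symm).symm.symm ≪≫
            ((shiftFunctorAdd' C (r - 1) (r' j) (m j) (by ring)).app X).symm))
  let Etot : (T ⟶ X⟦r⟧) ≃ₗ[ZMod 2] (∀ j, X ⟶ (X⟦m j⟧ : C)) :=
    E1.symm.trans ((E2.trans (E3.trans (AddEquiv.piCongrRight E4))).toZMod2LinearEquiv)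
  rw [Etot.finrank_eq]
  haveI : ∀ j, Module.Finite (ZMod 2) (X ⟶ (X⟦m j⟧ : C)) := fun j => (hfin X X).1 (m j)
  rw [Module.finrank_pi_fintype]
  -- compute each summand
  have hcomp : ∀ s : ℤ, Module.finrank (ZMod 2) (X ⟶ (X⟦s⟧ : C)) = if s = 0 then 1 else 0 := by
    intro s
    by_cases hs : s = 0
    · subst hs
      rw [if_pos rfl]
      have e : (X ⟶ (X⟦(0:ℤ)⟧ : C)) ≃ₗ[ZMod 2] (X ⟶ X) :=
        (homIsoAddEquiv (Iso.refl X) ((shiftFunctorZero C ℤ).app X)).toZMod2LinearEquiv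
      rw [e.finrank_eq]
      exact finrank_eq_one (𝟙 X) hX.2.1
        (fun w => Submodule.mem_span_singleton.1 (hX.2.2 ▸ Submodule.mem_top))
    · rw [if_neg hs]
      haveI : Subsingleton (X ⟶ (X⟦s⟧ : C)) :=
        ⟨fun a b => by rw [hX.1 s hs a, hX.1 s hs b]⟩
      exact Module.finrank_zero_of_subsingleton
  -- the right-hand side via the given homogeneous basis
  let B : Module.Basis {j : Fin κ // r' j = 1 - r} (ZMod 2) (X ⟶ (Y⟦1 - r⟧ : C)) :=
    Module.Basis.mk (hbasis (1 - r)).1 (le_of_eq (hbasis (1 - r)).2.symm)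
  rw [Module.finrank_eq_card_basis B, Fintype.card_subtype, Finset.card_filter]
  refine Finset.sum_congr rfl (fun j _ => ?_)
  rw [hcomp (m j)]
  exact if_congr (by simp only [m]; omega) rfl rfl
end
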